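/- arXiv:0909.5654 — 6 statements merged into one kernel-verified Lean document; each statement's English description precedes it below -/
import Mathlib

section
/- For all t ∈ [0, l], the inner product of the unit tangent vectors satisfies ⟪γ'(t), γ'(0)⟫ ≥ 1 − t²/(2ρ²). -/
/-!
By the mean value inequality the curvature bound makes `t ↦ γ' t` a `1/ρ`-Lipschitz map, so
`‖γ' t - γ' 0‖ ≤ t / ρ`; for unit vectors `‖u - v‖² = 2 - 2⟪u, v⟫`, which turns this chord bound
into the lower bound on the inner product.
-/

open scoped RealInnerProductSpace

theorem one_sub_sq_div_two_le_real_inner_of_norm_sub_le {E : Type*} [NormedAddCommGroup E]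
    [InnerProductSpace ℝ E] {u v : E} (hu : ‖u‖ = 1) (hv : ‖v‖ = 1) {d : ℝ}
    (hd : ‖u - v‖ ≤ d) : 1 - d ^ 2 / 2 ≤ ⟪u, v⟫ := by
  have hsq : ‖u - v‖ ^ 2 ≤ d ^ 2 := pow_le_pow_left₀ (norm_nonneg _) hd 2
  rw [norm_sub_sq_real, hu, hv] at hsq
  linarith

theorem tangent_inner_lower_bound_general
    {E : Type*} [NormedAddCommGroup E] [InnerProductSpace ℝ E]
    (ρ l : ℝ)
    (γ' γ'' : ℝ → E)
    (hγ'' : ∀ t ∈ Set.Icc (0 : ℝ) l, HasDerivAt γ' (γ'' t) t)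
    (hunit : ∀ t ∈ Set.Icc (0 : ℝ) l, ‖γ' t‖ = 1)
    (hcurv : ∀ t ∈ Set.Icc (0 : ℝ) l, ‖γ'' t‖ ≤ 1 / ρ) :
    ∀ t ∈ Set.Icc (0 : ℝ) l, ⟪γ' t, γ' 0⟫ ≥ 1 - t ^ 2 / (2 * ρ ^ 2) := by
  intro t ht
  have h0 : (0 : ℝ) ∈ Set.Icc (0 : ℝ) l := ⟨le_rfl, ht.1.trans ht.2⟩
  have hchord : ‖γ' t - γ' 0‖ ≤ t / ρ := by
    have := (convex_Icc (0 : ℝ) l).norm_image_sub_le_of_norm_hasDerivWithin_le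
      (fun x hx => (hγ'' x hx).hasDerivWithinAt) hcurv h0 ht
    rwa [sub_zero, Real.norm_of_nonneg ht.1, one_div_mul_eq_div] at this
  calc 1 - t ^ 2 / (2 * ρ ^ 2) = 1 - (t / ρ) ^ 2 / 2 := by ring
    _ ≤ ⟪γ' t, γ' 0⟫ :=
      one_sub_sq_div_two_le_real_inner_of_norm_sub_le (hunit t ht) (hunit 0 h0) hchord

theorem tangent_inner_lower_bound
    {E : Type*} [NormedAddCommGroup E] [InnerProductSpace ℝ E]
    (ρ l : ℝ) (hρ : 0 < ρ) (hl : 0 < l)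
    (γ γ' γ'' : ℝ → E)
    (hγ' : ∀ t ∈ Set.Icc (0 : ℝ) l, HasDerivAt γ (γ' t) t)
    (hγ'' : ∀ t ∈ Set.Icc (0 : ℝ) l, HasDerivAt γ' (γ'' t) t)
    (hcont : ContinuousOn γ'' (Set.Icc (0 : ℝ) l))
    (hunit : ∀ t ∈ Set.Icc (0 : ℝ) l, ‖γ' t‖ = 1)
    (hcurv : ∀ t ∈ Set.Icc (0 : ℝ) l, ‖γ'' t‖ ≤ 1 / ρ) :
    ∀ t ∈ Set.Icc (0 : ℝ) l, ⟪γ' t, γ' 0⟫ ≥ 1 - t ^ 2 / (2 * ρ ^ 2) :=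
  tangent_inner_lower_bound_general ρ l γ' γ'' hγ'' hunit hcurv
end

section
/- The projection of the chord onto the initial tangent direction satisfies ⟪γ(l) − γ(0), γ'(0)⟫ ≥ l − l³/(6ρ²). -/
open scoped RealInnerProductSpace

open Set

/-!
Since `γ'` is `κ`-Lipschitz by the curvature bound, `‖γ' t - γ' a‖ ≤ κ (t - a)`; for unit vectors
this means `⟪γ' t, γ' a⟫ ≥ 1 - κ² (t - a)² / 2`. Integrating this lower bound for the derivative of
`t ↦ ⟪γ t, γ' a⟫` from `a` to `b` gives the cubic bound on the chord, here with `κ = 1 / ρ`.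
-/

theorem sub_le_sub_of_hasDerivAt_le {f g f' g' : ℝ → ℝ} {a b : ℝ} (hab : a ≤ b)
    (hf : ∀ t ∈ Icc a b, HasDerivAt f (f' t) t) (hg : ∀ t ∈ Icc a b, HasDerivAt g (g' t) t)
    (hle : ∀ t ∈ Icc a b, g' t ≤ f' t) :
    g b - g a ≤ f b - f a := by
  have hderiv : ∀ t ∈ Icc a b, HasDerivAt (f - g) (f' t - g' t) t :=
    fun t ht ↦ (hf t ht).sub (hg t ht)
  have hmono : MonotoneOn (f - g) (Icc a b) := by
    refine monotoneOn_of_hasDerivWithinAt_nonneg (f' := f' - g') (convex_Icc a b)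
      (fun t ht ↦ (hderiv t ht).continuousAt.continuousWithinAt) (fun t ht ↦ ?_) (fun t ht ↦ ?_)
    · exact (hderiv t (interior_subset ht)).hasDerivWithinAt
    · exact sub_nonneg.2 (hle t (interior_subset ht))
  have := hmono (left_mem_Icc.2 hab) (right_mem_Icc.2 hab) hab
  simp only [Pi.sub_apply] at this
  linarith

section InnerProductSpace

variable {E : Type*} [NormedAddCommGroup E] [InnerProductSpace ℝ E]

theorem one_sub_sq_div_two_le_inner_of_norm_sub_le {u v : E} {r : ℝ} (hu : ‖u‖ = 1)
    (hv : ‖v‖ = 1) (h : ‖u - v‖ ≤ r) :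
    1 - r ^ 2 / 2 ≤ ⟪u, v⟫ := by
  have hsq : ‖u - v‖ ^ 2 ≤ r ^ 2 := pow_le_pow_left₀ (norm_nonneg _) h 2
  rw [norm_sub_sq_real, hu, hv] at hsq
  linarith

variable {γ γ' γ'' : ℝ → E} {κ a b : ℝ}

theorem one_sub_sq_div_two_le_inner_deriv
    (hγ'' : ∀ t ∈ Icc a b, HasDerivAt γ' (γ'' t) t)
    (hunit : ∀ t ∈ Icc a b, ‖γ' t‖ = 1) (hcurv : ∀ t ∈ Icc a b, ‖γ'' t‖ ≤ κ)
    {t : ℝ} (ht : t ∈ Icc a b) :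
    1 - (κ * (t - a)) ^ 2 / 2 ≤ ⟪γ' t, γ' a⟫ := by
  have ha : a ∈ Icc a b := left_mem_Icc.2 (ht.1.trans ht.2)
  have hlip : ‖γ' t - γ' a‖ ≤ κ * ‖t - a‖ :=
    Convex.norm_image_sub_le_of_norm_hasDerivWithin_le (fun s hs ↦ (hγ'' s hs).hasDerivWithinAt)
      hcurv (convex_Icc a b) ha ht
  rw [Real.norm_of_nonneg (sub_nonneg.2 ht.1)] at hlip
  exact one_sub_sq_div_two_le_inner_of_norm_sub_le (hunit t ht) (hunit a ha) hlip

theorem sub_sub_cube_div_six_le_inner_sub (hab : a ≤ b)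
    (hγ' : ∀ t ∈ Icc a b, HasDerivAt γ (γ' t) t)
    (hγ'' : ∀ t ∈ Icc a b, HasDerivAt γ' (γ'' t) t)
    (hunit : ∀ t ∈ Icc a b, ‖γ' t‖ = 1) (hcurv : ∀ t ∈ Icc a b, ‖γ'' t‖ ≤ κ) :
    (b - a) - κ ^ 2 * (b - a) ^ 3 / 6 ≤ ⟪γ b - γ a, γ' a⟫ := by
  have hproj : ∀ t ∈ Icc a b, HasDerivAt (fun s ↦ ⟪γ s, γ' a⟫) ⟪γ' t, γ' a⟫ t := fun t ht ↦ by
    simpa using (hγ' t ht).inner ℝ (hasDerivAt_const t (γ' a))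
  have hcubic : ∀ t ∈ Icc a b, HasDerivAt (fun s ↦ (s - a) - κ ^ 2 * (s - a) ^ 3 / 6)
      (1 - (κ * (t - a)) ^ 2 / 2) t := fun t _ ↦ by
    refine (((hasDerivAt_id' t).sub_const a).sub
      ((((hasDerivAt_id' t).sub_const a).pow 3).const_mul (κ ^ 2) |>.div_const 6)).congr_deriv ?_
    push_cast
    ring
  have := sub_le_sub_of_hasDerivAt_le hab hproj hcubic
    (fun t ht ↦ one_sub_sq_div_two_le_inner_deriv hγ'' hunit hcurv ht)
  simpa [inner_sub_left] using this

end InnerProductSpace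

theorem chord_projection_lower_bound_general
    {E : Type*} [NormedAddCommGroup E] [InnerProductSpace ℝ E]
    (ρ l : ℝ) (hl : 0 < l)
    (γ γ' γ'' : ℝ → E)
    (hγ' : ∀ t ∈ Set.Icc (0 : ℝ) l, HasDerivAt γ (γ' t) t)
    (hγ'' : ∀ t ∈ Set.Icc (0 : ℝ) l, HasDerivAt γ' (γ'' t) t)
    (hunit : ∀ t ∈ Set.Icc (0 : ℝ) l, ‖γ' t‖ = 1)
    (hcurv : ∀ t ∈ Set.Icc (0 : ℝ) l, ‖γ'' t‖ ≤ 1 / ρ) :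
    ⟪γ l - γ 0, γ' 0⟫ ≥ l - l ^ 3 / (6 * ρ ^ 2) := by
  have h := sub_sub_cube_div_six_le_inner_sub hl.le hγ' hγ'' hunit hcurv
  have hcoeff : l - (1 / ρ) ^ 2 * l ^ 3 / 6 = l - l ^ 3 / (6 * ρ ^ 2) := by ring
  rw [sub_zero, hcoeff] at h
  exact h

theorem chord_projection_lower_bound
    {E : Type*} [NormedAddCommGroup E] [InnerProductSpace ℝ E]
    (ρ l : ℝ) (hρ : 0 < ρ) (hl : 0 < l)
    (γ γ' γ'' : ℝ → E)
    (hγ' : ∀ t ∈ Set.Icc (0 : ℝ) l, HasDerivAt γ (γ' t) t)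
    (hγ'' : ∀ t ∈ Set.Icc (0 : ℝ) l, HasDerivAt γ' (γ'' t) t)
    (hcont : ContinuousOn γ'' (Set.Icc (0 : ℝ) l))
    (hunit : ∀ t ∈ Set.Icc (0 : ℝ) l, ‖γ' t‖ = 1)
    (hcurv : ∀ t ∈ Set.Icc (0 : ℝ) l, ‖γ'' t‖ ≤ 1 / ρ) :
    ⟪γ l - γ 0, γ' 0⟫ ≥ l - l ^ 3 / (6 * ρ ^ 2) :=
  chord_projection_lower_bound_general ρ l hl γ γ' γ'' hγ' hγ'' hunit hcurv
end

section
/- The chord length satisfies ‖γ(l) − γ(0)‖ ≥ l − l³/(6ρ²); that is, the Euclidean distance between the endpoints of a unit-speed curve of length l with curvature at most 1/ρ is at least l − l³/(6ρ²). -/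
/-!
Let `T = γ'` be the unit tangent. The curvature bound makes `T` Lipschitz with constant `κ = 1/ρ`,
so `‖T t - T 0‖ ≤ κ t`; for unit vectors this says `⟪T 0, T t⟫ ≥ 1 - κ² t² / 2`. Integrating,
the component of `γ l - γ 0` along `T 0` is at least `l - κ² l³ / 6`, and the chord is at least
as long as this component.
-/

open Set
open scoped RealInnerProductSpace

section

variable {F : Type*} [NormedAddCommGroup F] [InnerProductSpace ℝ F]

lemma real_inner_eq_one_sub_norm_sub_sq_div_two {u v : F} (hu : ‖u‖ = 1) (hv : ‖v‖ = 1) :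
    ⟪u, v⟫ = 1 - ‖u - v‖ ^ 2 / 2 := by
  rw [norm_sub_sq_real, hu, hv]
  ring

lemma one_sub_sq_div_two_le_inner_of_norm_deriv_le {T T' : ℝ → F} {a b κ : ℝ}
    (hT : ∀ t ∈ Icc a b, HasDerivAt T (T' t) t) (hT' : ∀ t ∈ Icc a b, ‖T' t‖ ≤ κ)
    (hunit : ∀ t ∈ Icc a b, ‖T t‖ = 1) {t : ℝ} (ht : t ∈ Icc a b) :
    1 - (κ * (t - a)) ^ 2 / 2 ≤ ⟪T a, T t⟫ := by
  have ha : a ∈ Icc a b := ⟨le_rfl, ht.1.trans ht.2⟩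
  have hdist : ‖T a - T t‖ ≤ κ * (t - a) := by
    rw [norm_sub_rev]
    exact norm_image_sub_le_of_norm_deriv_le_segment' (fun s hs => (hT s hs).hasDerivWithinAt)
      (fun s hs => hT' s (Ico_subset_Icc_self hs)) t ht
  rw [real_inner_eq_one_sub_norm_sub_sq_div_two (hunit a ha) (hunit t ht)]
  gcongr

lemma sub_mul_cube_div_six_le_inner_sub {γ γ' γ'' : ℝ → F} {l κ : ℝ} (hl : 0 ≤ l)
    (hγ' : ∀ t ∈ Icc 0 l, HasDerivAt γ (γ' t) t)
    (hγ'' : ∀ t ∈ Icc 0 l, HasDerivAt γ' (γ'' t) t)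
    (hunit : ∀ t ∈ Icc 0 l, ‖γ' t‖ = 1) (hcurv : ∀ t ∈ Icc 0 l, ‖γ'' t‖ ≤ κ) :
    l - κ ^ 2 * l ^ 3 / 6 ≤ ⟪γ' 0, γ l - γ 0⟫ := by
  have hlower (t : ℝ) : HasDerivAt (fun s => s - κ ^ 2 * s ^ 3 / 6) (1 - (κ * t) ^ 2 / 2) t := by
    refine ((hasDerivAt_id t).sub
      (((hasDerivAt_pow 3 t).const_mul (κ ^ 2)).div_const 6)).congr_deriv ?_
    push_cast
    ring
  have hchord (t : ℝ) (ht : t ∈ Icc 0 l) :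
      HasDerivAt (fun s => ⟪γ' 0, γ s - γ 0⟫) ⟪γ' 0, γ' t⟫ t :=
    (innerSL ℝ (γ' 0)).hasFDerivAt.comp_hasDerivAt t ((hγ' t ht).sub_const (γ 0))
  refine image_le_of_deriv_right_le_deriv_boundary (f' := fun t => 1 - (κ * t) ^ 2 / 2)
    (fun t _ => (hlower t).continuousAt.continuousWithinAt)
    (fun t _ => (hlower t).hasDerivWithinAt) (by simp)
    (fun t ht => (hchord t ht).continuousAt.continuousWithinAt)
    (fun t ht => (hchord t (Ico_subset_Icc_self ht)).hasDerivWithinAt) (fun t ht => ?_)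
    ⟨hl, le_rfl⟩
  simpa using
    one_sub_sq_div_two_le_inner_of_norm_deriv_le hγ'' hcurv hunit (Ico_subset_Icc_self ht)

end

theorem chord_length_lower_bound_general
    {E : Type*} [NormedAddCommGroup E] [InnerProductSpace ℝ E]
    (ρ l : ℝ) (hl : 0 < l)
    (γ γ' γ'' : ℝ → E)
    (hγ' : ∀ t ∈ Set.Icc (0 : ℝ) l, HasDerivAt γ (γ' t) t)
    (hγ'' : ∀ t ∈ Set.Icc (0 : ℝ) l, HasDerivAt γ' (γ'' t) t)
    (hunit : ∀ t ∈ Set.Icc (0 : ℝ) l, ‖γ' t‖ = 1)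
    (hcurv : ∀ t ∈ Set.Icc (0 : ℝ) l, ‖γ'' t‖ ≤ 1 / ρ) :
    ‖γ l - γ 0‖ ≥ l - l ^ 3 / (6 * ρ ^ 2) :=
  calc l - l ^ 3 / (6 * ρ ^ 2) = l - (1 / ρ) ^ 2 * l ^ 3 / 6 := by ring
    _ ≤ ⟪γ' 0, γ l - γ 0⟫ := sub_mul_cube_div_six_le_inner_sub hl.le hγ' hγ'' hunit hcurv
    _ ≤ ‖γ' 0‖ * ‖γ l - γ 0‖ := real_inner_le_norm _ _
    _ = ‖γ l - γ 0‖ := by rw [hunit 0 ⟨le_rfl, hl.le⟩, one_mul]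

theorem chord_length_lower_bound
    {E : Type*} [NormedAddCommGroup E] [InnerProductSpace ℝ E]
    (ρ l : ℝ) (hρ : 0 < ρ) (hl : 0 < l)
    (γ γ' γ'' : ℝ → E)
    (hγ' : ∀ t ∈ Set.Icc (0 : ℝ) l, HasDerivAt γ (γ' t) t)
    (hγ'' : ∀ t ∈ Set.Icc (0 : ℝ) l, HasDerivAt γ' (γ'' t) t)
    (hcont : ContinuousOn γ'' (Set.Icc (0 : ℝ) l))
    (hunit : ∀ t ∈ Set.Icc (0 : ℝ) l, ‖γ' t‖ = 1)
    (hcurv : ∀ t ∈ Set.Icc (0 : ℝ) l, ‖γ'' t‖ ≤ 1 / ρ) :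
    ‖γ l - γ 0‖ ≥ l - l ^ 3 / (6 * ρ ^ 2) :=
  chord_length_lower_bound_general ρ l hl γ γ' γ'' hγ' hγ'' hunit hcurv
end

section
/- Let X be a metric space, let ε > 0 and r > 2ε, and let ℓ > r − 2ε. Let g : ℝ → X be 1-Lipschitz on [0, ℓ] with g(0) = g(ℓ) (a closed curve of length at most ℓ parameterized by arclength), and let P ⊆ X be such that for every t ∈ [0, ℓ] there exists p ∈ P with dist(g(t), p) < ε. Then there exist an integer m ≥ 2 and points p₀, p₁, …, p_m ∈ P with p_m = p₀ such that dist(p_i, p_{i+1}) < r for every 0 ≤ i < m, and the total length satisfies Σ_{i=0}^{m−1} dist(p_i, p_{i+1}) ≤ (r/(r − 2ε))·ℓ + 2ε. (In particular, consecutive points are joined by edges of the Čech complex Čech^r(P), so the polygonal loop p₀p₁…p_m lies in the 1-skeleton of Čech^r(P).) -/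
/-!
Put `δ = r - 2ε` and `m = ⌈ℓ / δ⌉₊ ≥ 2`. The points `g (i ℓ / m)`, `0 ≤ i ≤ m`, cut the curve
into `m` arcs of length `ℓ / m ≤ δ`; replacing each by a sample point within `ε` (the same one at
both ends, as `g 0 = g ℓ`) moves consecutive points apart by less than `ℓ / m + 2ε ≤ r`. The loop
then has length less than `m (ℓ / m + 2ε) = ℓ + 2εm ≤ ℓ + 2ε (ℓ / δ + 1) = r ℓ / δ + 2ε`.
-/

open Set

lemma natCast_mul_div_mem_Icc {ℓ : ℝ} (hℓ : 0 ≤ ℓ) {i m : ℕ} (hi : i ≤ m) :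
    (i * ℓ / m : ℝ) ∈ Icc 0 ℓ := by
  refine ⟨by positivity, div_le_of_le_mul₀ m.cast_nonneg hℓ ?_⟩
  rw [mul_comm ℓ]
  exact mul_le_mul_of_nonneg_right (Nat.cast_le.2 hi) hℓ

section Metric

variable {X : Type*} [PseudoMetricSpace X]

lemma dist_lt_of_dist_le_of_near {x y x' y' : X} {s ε : ℝ} (hxy : dist x y ≤ s)
    (hx : dist x x' < ε) (hy : dist y y' < ε) : dist x' y' < s + 2 * ε := by
  have := dist_triangle4 x' x y y'
  rw [dist_comm x' x] at this
  linarith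

-- Indices are read modulo `m`, so that the shadow closes up because `c m = c 0`.
lemma exists_closed_chain_near {P : Set X} {ε : ℝ} {c : ℕ → X} {m : ℕ} (hm : 0 < m)
    (hc : c m = c 0) (hP : ∀ i < m, ∃ p ∈ P, dist (c i) p < ε) :
    ∃ p : ℕ → X, (∀ i, p i ∈ P) ∧ p m = p 0 ∧ ∀ i ≤ m, dist (c i) (p i) < ε := by
  choose q hqP hqd using hP
  refine ⟨fun i ↦ q (i % m) (Nat.mod_lt i hm), fun i ↦ hqP _ _, by simp [Nat.mod_self], ?_⟩
  intro i hi
  rcases hi.lt_or_eq with hi | rfl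
  · simpa only [Nat.mod_eq_of_lt hi] using hqd i hi
  · simpa only [Nat.mod_self, hc] using hqd 0 hm

lemma dist_le_of_lipschitzOnWith_partition {g : ℝ → X} {K : NNReal} {ℓ : ℝ} (hℓ : 0 ≤ ℓ)
    (hg : LipschitzOnWith K g (Icc 0 ℓ)) {i m : ℕ} (hi : i < m) :
    dist (g (i * ℓ / m)) (g ((i + 1 : ℕ) * ℓ / m)) ≤ K * (ℓ / m) := by
  have h := hg.dist_le_mul _ (natCast_mul_div_mem_Icc hℓ hi.le) _ (natCast_mul_div_mem_Icc hℓ hi)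
  have hstep : dist (i * ℓ / m : ℝ) ((i + 1 : ℕ) * ℓ / m) = ℓ / m := by
    have : ((i + 1 : ℕ) * ℓ / m : ℝ) - i * ℓ / m = ℓ / m := by push_cast; ring
    rw [dist_comm, Real.dist_eq, this, abs_of_nonneg (by positivity)]
  rwa [hstep] at h

lemma exists_closed_chain_of_lipschitzOnWith {g : ℝ → X} {K : NNReal} {ℓ ε : ℝ} {P : Set X}
    (hℓ : 0 ≤ ℓ) (hg : LipschitzOnWith K g (Icc 0 ℓ)) (hclosed : g 0 = g ℓ)
    (hsample : ∀ t ∈ Icc 0 ℓ, ∃ p ∈ P, dist (g t) p < ε) {m : ℕ} (hm : 0 < m) :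
    ∃ p : ℕ → X, (∀ i, p i ∈ P) ∧ p m = p 0 ∧
      ∀ i < m, dist (p i) (p (i + 1)) < K * (ℓ / m) + 2 * ε := by
  have hc : g (m * ℓ / m) = g ((0 : ℕ) * ℓ / m) := by
    rw [mul_div_cancel_left₀ _ (by positivity), Nat.cast_zero, zero_mul, zero_div, hclosed]
  obtain ⟨p, hpP, hpm, hpd⟩ := exists_closed_chain_near (c := fun i ↦ g (i * ℓ / m)) hm hc
    fun i hi ↦ hsample _ (natCast_mul_div_mem_Icc hℓ hi.le)
  exact ⟨p, hpP, hpm, fun i hi ↦ dist_lt_of_dist_le_of_near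
    (dist_le_of_lipschitzOnWith_partition hℓ hg hi) (hpd i hi.le) (hpd (i + 1) hi)⟩

end Metric

lemma div_natCeil_div_le {ℓ δ : ℝ} (hδ : 0 < δ) : ℓ / ⌈ℓ / δ⌉₊ ≤ δ :=
  div_le_of_le_mul₀ (Nat.cast_nonneg _) hδ.le ((div_le_iff₀' hδ).1 (Nat.le_ceil _))

theorem decomposition_method
    {X : Type*} [MetricSpace X]
    (ε r ℓ : ℝ) (hε : 0 < ε) (hr : 2 * ε < r) (hℓ : r - 2 * ε < ℓ)
    (g : ℝ → X) (hlip : LipschitzOnWith 1 g (Set.Icc 0 ℓ))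
    (hclosed : g 0 = g ℓ)
    (P : Set X)
    (hsample : ∀ t ∈ Set.Icc (0 : ℝ) ℓ, ∃ p ∈ P, dist (g t) p < ε) :
    ∃ (m : ℕ) (p : ℕ → X), 2 ≤ m ∧
      (∀ i ≤ m, p i ∈ P) ∧
      p m = p 0 ∧
      (∀ i < m, dist (p i) (p (i + 1)) < r) ∧
      (∑ i ∈ Finset.range m, dist (p i) (p (i + 1))) ≤ r / (r - 2 * ε) * ℓ + 2 * ε := by
  set δ := r - 2 * ε
  have hδ : 0 < δ := sub_pos.2 hr
  have hℓ₀ : 0 ≤ ℓ := (hδ.trans hℓ).le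
  set m := ⌈ℓ / δ⌉₊
  have hm : 2 ≤ m := Nat.lt_ceil.2 (by exact_mod_cast (one_lt_div hδ).2 hℓ)
  have hm_le : (m : ℝ) ≤ ℓ / δ + 1 := (Nat.ceil_lt_add_one (by positivity)).le
  have hmesh : ℓ / m ≤ δ := div_natCeil_div_le hδ
  obtain ⟨p, hpP, hpm, hstep⟩ :=
    exists_closed_chain_of_lipschitzOnWith hℓ₀ hlip hclosed hsample (m := m) (by omega)
  simp only [NNReal.coe_one, one_mul] at hstep
  refine ⟨m, p, hm, fun i _ ↦ hpP i, hpm, fun i hi ↦ by linarith [hstep i hi], ?_⟩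
  calc ∑ i ∈ Finset.range m, dist (p i) (p (i + 1))
      ≤ (Finset.range m).card • (ℓ / m + 2 * ε) :=
        Finset.sum_le_card_nsmul _ _ _ fun i hi ↦ (hstep i (Finset.mem_range.1 hi)).le
    _ = ℓ + 2 * ε * m := by
        rw [Finset.card_range, nsmul_eq_mul, mul_add, mul_div_cancel₀ _ (by positivity)]
        ring
    _ ≤ ℓ + 2 * ε * (ℓ / δ + 1) := by gcongr
    _ = r / δ * ℓ + 2 * ε := by
        field_simp
        ring
end

section
/- Let F be a field, V a vector space over F, n a natural number, v : Fin n → V a finite sequence of vectors, and w : Fin n → ℝ a weight function with w(i) ≥ 0 for all i and w nondecreasing (the vectors are listed in order of nondecreasing weight). Let G ⊆ Fin n be the greedy set, i.e. the unique subset such that for every i, i ∈ G if and only if v(i) does not lie in the span of { v(j) : j ∈ G, j < i }. Then the family (v(i))_{i ∈ G} is a basis of the span of { v(0), …, v(n−1) }, and for every subset I ⊆ Fin n such that (v(i))_{i ∈ I} is linearly independent and spans the span of { v(0), …, v(n−1) }, one has Σ_{i ∈ G} w(i) ≤ Σ_{i ∈ I} w(i). In other words, the greedy set is a minimum-weight basis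 of the span, among all bases chosen from the given family. -/
/-!
Every `v i` lies in the span of the greedy vectors of index `≤ i`. Hence, for each `m`, an
independent subfamily of the vectors of index `≤ m` has at most as many members as `G` has
there, so the greedy set is ahead of any basis `I` on every initial segment. For a monotone
weight this domination of counting functions already forces `∑ G w ≤ ∑ I w`.
-/

open Finset Submodule

theorem Finset.linearIndepOn_of_notMem_span_lt {ι K V : Type*} [LinearOrder ι] [DivisionRing K]
    [AddCommGroup V] [Module K V] {v : ι → V} (s : Finset ι)
    (hs : ∀ i ∈ s, v i ∉ span K (v '' {j | j ∈ s ∧ j < i})) :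
    LinearIndepOn K v (s : Set ι) := by
  classical
  induction s using Finset.induction_on_max with
  | empty => simp
  | insert a s hlt ih =>
    have hbelow : ∀ i, i < a → {j | j ∈ insert a s ∧ j < i} = {j | j ∈ s ∧ j < i} := by
      intro i hi
      ext j
      simp only [Set.mem_ofPred_eq, mem_insert, and_congr_left_iff, or_iff_right_iff_imp]
      rintro hj rfl
      exact absurd (hj.trans hi) (lt_irrefl _)
    have hnew : {j | j ∈ insert a s ∧ j < a} = s := by
      ext j
      simp only [Set.mem_ofPred_eq, mem_insert, mem_coe]
      exact ⟨fun ⟨hj, hja⟩ => hj.resolve_left hja.ne, fun hj => ⟨.inr hj, hlt j hj⟩⟩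
    rw [coe_insert]
    refine LinearIndepOn.insert (ih fun i hi => ?_) ?_
    · rw [← hbelow i (hlt i hi)]
      exact hs i (mem_insert_of_mem hi)
    · rw [← hnew]
      exact hs a (mem_insert_self a s)

theorem Finset.card_le_card_of_linearIndepOn_of_subset_span {ι K V : Type*} [DivisionRing K]
    [AddCommGroup V] [Module K V] {v : ι → V} {s t : Finset ι}
    (ht : LinearIndepOn K v (t : Set ι)) (hts : v '' t ⊆ span K (v '' s)) : #t ≤ #s := by
  have hspan : span K (Set.range fun i : (t : Set ι) => v i) ≤
      span K (Set.range fun i : (s : Set ι) => v i) := by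
    simpa [span_le, Set.image_eq_range] using hts
  have : Module.Finite K (span K (Set.range fun i : (s : Set ι) => v i)) :=
    FiniteDimensional.span_of_finite K (Set.finite_range _)
  calc #t = Module.finrank K (span K (Set.range fun i : (t : Set ι) => v i)) := by
        rw [finrank_span_eq_card ht]; simp
    _ ≤ Module.finrank K (span K (Set.range fun i : (s : Set ι) => v i)) :=
        Submodule.finrank_mono hspan
    _ ≤ #s := (finrank_range_le_card (R := K) _).trans_eq (by simp)

theorem Monotone.sum_le_sum_of_card_filter_le {ι M : Type*} [LinearOrder ι] [AddCommMonoid M]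
    [PartialOrder M] [IsOrderedAddMonoid M] {f : ι → M} (hf : Monotone f) {s t : Finset ι}
    (hcard : #s = #t) (h : ∀ m, #(t.filter (· ≤ m)) ≤ #(s.filter (· ≤ m))) :
    ∑ i ∈ s, f i ≤ ∑ i ∈ t, f i := by
  classical
  induction s using Finset.induction_on_max generalizing t with
  | empty => simp [card_eq_zero.1 hcard.symm]
  | insert a s hlt ih =>
    have has : a ∉ s := fun ha => lt_irrefl a (hlt a ha)
    rw [card_insert_of_notMem has] at hcard
    have ht : t.Nonempty := card_pos.1 (by omega)
    set b := t.max' ht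
    have hb : b ∈ t := max'_mem t ht
    -- all `#s + 1` elements of `t` are `≤ b`, while below `a` there are only the `#s` of `s`
    have hab : a ≤ b := by
      by_contra! hba
      have hall : t.filter (· ≤ b) = t := filter_true_of_mem fun x hx => le_max' t x hx
      have := h b
      rw [hall, filter_insert, if_neg hba.not_ge] at this
      have := card_filter_le s (· ≤ b)
      omega
    rw [sum_insert has, ← insert_erase hb, sum_insert (notMem_erase b t)]
    refine add_le_add (hf hab) (ih (by rw [card_erase_of_mem hb]; omega) fun m => ?_)
    by_cases ham : a ≤ m
    · rw [filter_true_of_mem fun x hx => ((hlt x hx).trans_le ham).le]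
      have := card_filter_le (t.erase b) (· ≤ m)
      rw [card_erase_of_mem hb] at this
      omega
    · calc #((t.erase b).filter (· ≤ m)) ≤ #(t.filter (· ≤ m)) :=
            card_le_card (filter_subset_filter _ (erase_subset b t))
        _ ≤ #((insert a s).filter (· ≤ m)) := h m
        _ = #(s.filter (· ≤ m)) := by rw [filter_insert, if_neg ham]

theorem greedy_set_is_min_weight_basis_general
    {F : Type*} [Field F] {V : Type*} [AddCommGroup V] [Module F V]
    (n : ℕ) (v : Fin n → V) (w : Fin n → ℝ)
    (hwmono : Monotone w)
    (G : Finset (Fin n))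
    (hG : ∀ i, i ∈ G ↔ v i ∉ Submodule.span F (v '' {j | j ∈ G ∧ j < i})) :
    (LinearIndependent F (fun i : {x // x ∈ G} => v i) ∧
      Submodule.span F (v '' ↑G) = Submodule.span F (Set.range v)) ∧
    ∀ I : Finset (Fin n),
      LinearIndependent F (fun i : {x // x ∈ I} => v i) →
      Submodule.span F (v '' ↑I) = Submodule.span F (Set.range v) →
      ∑ i ∈ G, w i ≤ ∑ i ∈ I, w i := by
  have hspan_le : ∀ i, v i ∈ span F (v '' {j | j ∈ G ∧ j ≤ i}) := by
    intro i
    by_cases hi : i ∈ G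
    · exact subset_span ⟨i, ⟨hi, le_rfl⟩, rfl⟩
    · refine span_mono (Set.image_mono ?_) (of_not_not ((hG i).not.1 hi))
      exact fun j hj => ⟨hj.1, hj.2.le⟩
  have hGind : LinearIndepOn F v (G : Set (Fin n)) :=
    G.linearIndepOn_of_notMem_span_lt fun i hi => (hG i).1 hi
  have hGspan : span F (v '' G) = span F (Set.range v) :=
    le_antisymm (span_mono (Set.image_subset_range v G)) <| span_le.2 <| Set.range_subset_iff.2
      fun i => span_mono (Set.image_mono fun j hj => hj.1) (hspan_le i)
  refine ⟨⟨hGind, hGspan⟩, fun I (hIind : LinearIndepOn F v (I : Set (Fin n))) hIspan =>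
    hwmono.sum_le_sum_of_card_filter_le ?_ ?_⟩
  · exact le_antisymm
      (card_le_card_of_linearIndepOn_of_subset_span hGind (hIspan ▸ hGspan ▸ subset_span))
      (card_le_card_of_linearIndepOn_of_subset_span hIind (hGspan ▸ hIspan ▸ subset_span))
  · intro m
    refine card_le_card_of_linearIndepOn_of_subset_span (hIind.mono (filter_subset _ I)) ?_
    rintro _ ⟨i, hi, rfl⟩
    have him := mem_filter.1 hi
    exact span_mono (Set.image_mono fun j hj => mem_filter.2 ⟨hj.1, hj.2.trans him.2⟩) (hspan_le i)

theorem greedy_set_is_min_weight_basis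
    {F : Type*} [Field F] {V : Type*} [AddCommGroup V] [Module F V]
    (n : ℕ) (v : Fin n → V) (w : Fin n → ℝ)
    (hw0 : ∀ i, 0 ≤ w i) (hwmono : Monotone w)
    (G : Finset (Fin n))
    (hG : ∀ i, i ∈ G ↔ v i ∉ Submodule.span F (v '' {j | j ∈ G ∧ j < i})) :
    (LinearIndependent F (fun i : {x // x ∈ G} => v i) ∧
      Submodule.span F (v '' ↑G) = Submodule.span F (Set.range v)) ∧
    ∀ I : Finset (Fin n),
      LinearIndependent F (fun i : {x // x ∈ I} => v i) →
      Submodule.span F (v '' ↑I) = Submodule.span F (Set.range v) →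
      ∑ i ∈ G, w i ≤ ∑ i ∈ I, w i :=
  greedy_set_is_min_weight_basis_general n v w hwmono G hG
end

section
/- Let F be a field (in the application F = ℤ₂) and V a finite-dimensional vector space over F. Let S be a finite set, and let v : S → V and w : S → ℝ with w(s) ≥ 0 for all s ∈ S; fix a linear order ≼ on S that refines the weights, i.e. s ≼ t implies w(s) ≤ w(t). For a subset C ⊆ S, define greedy(C) ⊆ C as the unique subset such that for every s ∈ C, s ∈ greedy(C) if and only if v(s) does not lie in the span of { v(t) : t ∈ greedy(C), t ≺ s }. Let (C_p)_{p ∈ Q} be a finite family of subsets of S. Suppose there exists a subset B ⊆ ⋃_{p ∈ Q} C_p such that (v(b))_{b ∈ B} is a basis of V and Σ_{b ∈ B} w(b) is minimal among all subsets of S whose images under v form a basis of V. Then there exists a subset B' ⊆ ⋃_{p ∈ Q} greedy(C_p) such that (v(b))_{b ∈ B'} is a basis of V and Σ_{b ∈ B'} w(b) equals that same minimum. In other words, replacing each set C_p by its greedy subset greedy(C_p) preserves the existence of a minimum-weight basis in the union. -/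
/-!
Among the minimum-weight bases inside `⋃ p, C p`, take one whose elements sit as low as possible in
the order on `S`. If one of its elements `b ∈ C p` were not greedy, `v b` would lie in the span of
the greedy elements of `C p` below `b`, so one of them, `g`, escapes the span of the other basis
vectors. Exchanging `b` for `g` gives a basis of no larger weight, hence again of minimum weight,
lying strictly lower in the order: a contradiction.
-/

theorem Finset.sum_insert_erase_add {ι M : Type*} [AddCommMonoid M] [DecidableEq ι]
    {s : Finset ι} {a b : ι} (f : ι → M) (ha : a ∈ s) (hb : b ∉ s.erase a) :
    ∑ x ∈ insert b (s.erase a), f x + f a = ∑ x ∈ s, f x + f b := by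
  rw [Finset.sum_insert hb, add_assoc, Finset.sum_erase_add s f ha, add_comm]

section Exchange

variable {ι K V : Type*} [DivisionRing K] [AddCommGroup V] [Module K V] [DecidableEq ι]
  {v : ι → V} {s : Finset ι} {a b : ι}

theorem LinearIndepOn.apply_notMem_span_image_erase (hs : LinearIndepOn K v ↑s) (ha : a ∈ s) :
    v a ∉ Submodule.span K (v '' ↑(s.erase a)) :=
  (hs.mono (Finset.coe_subset.2 (s.erase_subset a))).notMem_span_iff.2
    ⟨by rwa [← Finset.coe_insert, Finset.insert_erase ha], Finset.notMem_erase a s⟩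

theorem LinearIndepOn.exists_notMem_span_image_erase (hs : LinearIndepOn K v ↑s) (ha : a ∈ s)
    {G : Set ι} (haG : v a ∈ Submodule.span K (v '' G)) :
    ∃ g ∈ G, v g ∉ Submodule.span K (v '' ↑(s.erase a)) := by
  by_contra! hG
  refine hs.apply_notMem_span_image_erase ha (Submodule.span_le.2 ?_ haG)
  rintro _ ⟨g, hg, rfl⟩
  exact hG g hg

theorem LinearIndepOn.insert_erase (hs : LinearIndepOn K v ↑s)
    (hb : v b ∉ Submodule.span K (v '' ↑(s.erase a))) :
    LinearIndepOn K v ↑(insert b (s.erase a)) :=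
  Finset.coe_insert b _ ▸ (hs.mono (Finset.coe_subset.2 (s.erase_subset a))).insert hb

theorem span_image_insert_erase_eq_top (hs : Submodule.span K (v '' ↑s) = ⊤) (ha : a ∈ s)
    (hb : v b ∉ Submodule.span K (v '' ↑(s.erase a))) :
    Submodule.span K (v '' ↑(insert b (s.erase a))) = ⊤ := by
  have hva : v a ∈ Submodule.span K (v '' ↑(insert b (s.erase a))) := by
    rw [Finset.coe_insert, Set.image_insert_eq]
    refine mem_span_insert_exchange ?_ hb
    rw [← Set.image_insert_eq, ← Finset.coe_insert, Finset.insert_erase ha, hs]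
    exact Submodule.mem_top
  rw [eq_top_iff, ← hs, Submodule.span_le]
  rintro _ ⟨x, hx, rfl⟩
  obtain rfl | hxa := eq_or_ne x a
  · exact hva
  · exact Submodule.subset_span ⟨x, by simp [hxa, hx], rfl⟩

end Exchange

theorem greedy_subsets_preserve_min_weight_basis_general
    {F : Type*} [Field F] {V : Type*} [AddCommGroup V] [Module F V]
    {S : Type*} [Fintype S] [LinearOrder S]
    (v : S → V) (w : S → ℝ)
    (hle : ∀ s t : S, s ≤ t → w s ≤ w t)
    (greedy : Set S → Set S)
    (hgreedy_sub : ∀ C : Set S, greedy C ⊆ C)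
    (hgreedy : ∀ (C : Set S), ∀ s ∈ C,
      (s ∈ greedy C ↔ v s ∉ Submodule.span F (v '' {t | t ∈ greedy C ∧ t < s})))
    {Q : Type*} (C : Q → Set S)
    (B : Finset S)
    (hBsub : (↑B : Set S) ⊆ ⋃ p, C p)
    (hBindep : LinearIndependent F (fun b : {x // x ∈ B} => v b))
    (hBspan : Submodule.span F (v '' ↑B) = ⊤)
    (hBmin : ∀ B₂ : Finset S,
      LinearIndependent F (fun b : {x // x ∈ B₂} => v b) →
      Submodule.span F (v '' ↑B₂) = ⊤ →
      ∑ b ∈ B, w b ≤ ∑ b ∈ B₂, w b) :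
    ∃ B' : Finset S, (↑B' : Set S) ⊆ (⋃ p, greedy (C p)) ∧
      LinearIndependent F (fun b : {x // x ∈ B'} => v b) ∧
      Submodule.span F (v '' ↑B') = ⊤ ∧
      ∑ b ∈ B', w b = ∑ b ∈ B, w b := by
  classical
  let P : Set (Finset S) := {B' | ↑B' ⊆ ⋃ p, C p ∧ LinearIndepOn F v ↑B' ∧
    Submodule.span F (v '' ↑B') = ⊤ ∧ ∑ b ∈ B', w b = ∑ b ∈ B, w b}
  let rank := (Fintype.orderIsoFinOfCardEq S rfl).symm
  obtain ⟨B₀, ⟨hsub, hind, hspan, hw⟩, hlowest⟩ := P.exists_min_image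
    (fun B' => ∑ b ∈ B', (rank b : ℕ)) P.toFinite ⟨B, hBsub, hBindep, hBspan, rfl⟩
  refine ⟨B₀, fun b hb => ?_, hind, hspan, hw⟩
  by_contra hbG
  obtain ⟨p, hbC⟩ := Set.mem_iUnion.1 (hsub hb)
  have hb_span : v b ∈ Submodule.span F (v '' {t | t ∈ greedy (C p) ∧ t < b}) :=
    not_not.1 (mt (hgreedy _ b hbC).2 fun h => hbG (Set.mem_iUnion.2 ⟨p, h⟩))
  obtain ⟨g, ⟨hgG, hgb⟩, hg⟩ := hind.exists_notMem_span_image_erase hb hb_span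
  have hg_erase : g ∉ B₀.erase b := fun h => hg (Submodule.subset_span ⟨g, h, rfl⟩)
  have hB₁_ind := hind.insert_erase hg
  have hB₁_span := span_image_insert_erase_eq_top hspan hb hg
  have hB₁_sub : ↑(insert g (B₀.erase b)) ⊆ ⋃ p, C p :=
    Finset.coe_insert g _ ▸ Set.insert_subset (Set.mem_iUnion.2 ⟨p, hgreedy_sub _ hgG⟩)
      ((Finset.coe_subset.2 (B₀.erase_subset b)).trans hsub)
  have hw_swap := Finset.sum_insert_erase_add w hb hg_erase
  have hB₁ : insert g (B₀.erase b) ∈ P := ⟨hB₁_sub, hB₁_ind, hB₁_span,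
    le_antisymm (by linarith [hle g b hgb.le]) (hBmin _ hB₁_ind hB₁_span)⟩
  have hrank_swap := Finset.sum_insert_erase_add (fun x => (rank x : ℕ)) hb hg_erase
  have := hlowest _ hB₁
  have : (rank g : ℕ) < rank b := rank.strictMono hgb
  omega

theorem greedy_subsets_preserve_min_weight_basis
    {F : Type*} [Field F] {V : Type*} [AddCommGroup V] [Module F V]
    [FiniteDimensional F V]
    {S : Type*} [Fintype S] [LinearOrder S]
    (v : S → V) (w : S → ℝ)
    (hw0 : ∀ s, 0 ≤ w s)
    (hle : ∀ s t : S, s ≤ t → w s ≤ w t)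
    (greedy : Set S → Set S)
    (hgreedy_sub : ∀ C : Set S, greedy C ⊆ C)
    (hgreedy : ∀ (C : Set S), ∀ s ∈ C,
      (s ∈ greedy C ↔ v s ∉ Submodule.span F (v '' {t | t ∈ greedy C ∧ t < s})))
    {Q : Type*} [Fintype Q] (C : Q → Set S)
    (B : Finset S)
    (hBsub : (↑B : Set S) ⊆ ⋃ p, C p)
    (hBindep : LinearIndependent F (fun b : {x // x ∈ B} => v b))
    (hBspan : Submodule.span F (v '' ↑B) = ⊤)
    (hBmin : ∀ B₂ : Finset S,
      LinearIndependent F (fun b : {x // x ∈ B₂} => v b) →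
      Submodule.span F (v '' ↑B₂) = ⊤ →
      ∑ b ∈ B, w b ≤ ∑ b ∈ B₂, w b) :
    ∃ B' : Finset S, (↑B' : Set S) ⊆ (⋃ p, greedy (C p)) ∧
      LinearIndependent F (fun b : {x // x ∈ B'} => v b) ∧
      Submodule.span F (v '' ↑B') = ⊤ ∧
      ∑ b ∈ B', w b = ∑ b ∈ B, w b :=
  greedy_subsets_preserve_min_weight_basis_general v w hle greedy hgreedy_sub hgreedy C B hBsub
    hBindep hBspan hBmin
end
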